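/- arXiv:1705.02257 — 4 statements merged into one kernel-verified Lean document; each statement's English description precedes it below -/
import Mathlib

section
/- There exist absolute constants C ≥ 1 and c ≥ 1 with the following property. Let N, k, α, r be integers with k ≥ 2, r ≥ 2, α ≥ C·ln(k·r), and αk − 1 ≤ N. Let S be a subset of {1,…,N} of size αk − 1 chosen uniformly at random among all such subsets, let y_1 < y_2 < … < y_{αk−1} be the elements of S in increasing order, and define the equidistant pivots s_i = y_{iα} for i = 1,…,k−1, together with s_0 = 0 and s_k = N. Then with probability at least 1 − 1/r, every bucket B_i = {v ∈ {1,…,N} : s_{i−1} < v ≤ s_i} (i = 1,…,k) has size at most c·N/k. -/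
attribute [local instance] Classical.propDecidable

/-- The `i`-th equidistant pivot chosen from the sample `S ⊆ {1,…,N}` (of size `α·k - 1`)
with oversampling factor `α`: `s 0 = 0`, `s k = N`, and for `1 ≤ i ≤ k - 1`,
`s i` is the `(i·α)`-th smallest element of `S`. -/
noncomputable def pivot (N k α : ℕ) (S : Finset ℕ) (i : ℕ) : ℕ :=
  if i = 0 then 0 else if i = k then N else (S.sort (· ≤ ·)).getD (i * α - 1) 0

/-!
Cut `{1,…,N}` into `b = ⌈k/32⌉` consecutive blocks of length at least `⌊N/b⌋`. Two consecutive
pivots enclose at most `α` sample points, so if every block receives more than `α` sample points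
then no bucket contains a whole block, and every bucket has fewer than `2(N/b + 1)` elements,
which is at most `96 N/k`.

A block `B` of length `l` meets exactly `j` points of a sample of size `m` for
`C(l, j) C(N - l, m - j)` of the samples. The intersection has expected size at least about
`16α`, and for `j < 2α` these weights at least double from `j` to `j + 1`; hence the samples
meeting `B` in at most `α` points form a fraction at most `2^(1-α)`. A union bound over the `b ≤ k` blocks,
together with `2kr ≤ 2^α` (from `α ≥ 3 ln(kr)`), bounds the failure probability by `1/r`.
For `k < 33` there is a single block, which deterministically contains all `αk - 1 > α` points.
-/

open Finset

namespace Oversampling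

theorem card_filter_card_inter_eq {ι : Type*} [DecidableEq ι] {Ω B : Finset ι} (hB : B ⊆ Ω)
    {m j : ℕ} (hj : j ≤ m) :
    #{S ∈ Ω.powersetCard m | #(S ∩ B) = j} = (#B).choose j * (#(Ω \ B)).choose (m - j) := by
  rw [← card_powersetCard, ← card_powersetCard, ← card_product]
  refine card_bij' (fun S _ => (S ∩ B, S \ B)) (fun P _ => P.1 ∪ P.2) ?_ ?_ ?_ ?_
  · intro S hS
    simp only [mem_filter, mem_powersetCard, mem_product] at hS ⊢
    have := card_inter_add_card_sdiff S B
    refine ⟨⟨inter_subset_right, hS.2⟩, sdiff_subset_sdiff hS.1.1 subset_rfl, by omega⟩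
  · rintro ⟨P, Q⟩ h
    simp only [mem_filter, mem_powersetCard, mem_product, subset_sdiff] at h ⊢
    have hPQ : Disjoint P Q := h.2.1.2.symm.mono_left h.1.1
    refine ⟨⟨union_subset (h.1.1.trans hB) h.2.1.1, ?_⟩, ?_⟩
    · rw [card_union_of_disjoint hPQ]; omega
    · rw [union_inter_distrib_right, inter_eq_left.2 h.1.1,
        disjoint_iff_inter_eq_empty.1 h.2.1.2, union_empty, h.1.2]
  · intro S _
    exact sup_inf_sdiff S B
  · rintro ⟨P, Q⟩ h
    simp only [mem_powersetCard, mem_product, subset_sdiff] at h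
    rw [Prod.mk.injEq, union_inter_distrib_right, union_sdiff_distrib, inter_eq_left.2 h.1.1,
      disjoint_iff_inter_eq_empty.1 h.2.1.2, sdiff_eq_empty_iff_subset.2 h.1.1,
      sdiff_eq_self_of_disjoint h.2.1.2]
    simp

theorem two_mul_choose_mul_choose_le {l n m j : ℕ} (hjm : j < m)
    (h : 2 * ((j + 1) * (n - (m - (j + 1)))) ≤ (l - j) * (m - j)) :
    2 * (l.choose j * n.choose (m - j)) ≤ l.choose (j + 1) * n.choose (m - (j + 1)) := by
  obtain ⟨i, rfl⟩ : ∃ i, m = i + (j + 1) := ⟨m - (j + 1), by omega⟩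
  rw [show i + (j + 1) - j = i + 1 by omega, Nat.add_sub_cancel] at h ⊢
  refine Nat.le_of_mul_le_mul_right (c := (j + 1) * (i + 1)) ?_ (by positivity)
  have hl := Nat.choose_succ_right_eq l j
  have hn := Nat.choose_succ_right_eq n i
  calc 2 * (l.choose j * n.choose (i + 1)) * ((j + 1) * (i + 1))
      = l.choose j * (n.choose (i + 1) * (i + 1)) * 2 * (j + 1) := by ring
    _ = l.choose j * n.choose i * (2 * ((j + 1) * (n - i))) := by rw [hn]; ring
    _ ≤ l.choose j * n.choose i * ((l - j) * (i + 1)) := Nat.mul_le_mul_left _ h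
    _ = l.choose (j + 1) * (j + 1) * n.choose i * (i + 1) := by rw [hl]; ring
    _ = l.choose (j + 1) * n.choose i * ((j + 1) * (i + 1)) := by ring

theorem sum_range_le_two_mul_of_two_mul_le {T : ℕ → ℕ} {n : ℕ}
    (h : ∀ j < n, 2 * T j ≤ T (j + 1)) {t : ℕ} (ht : t ≤ n) :
    ∑ j ∈ range (t + 1), T j ≤ 2 * T t := by
  induction t with
  | zero => simp [two_mul]
  | succ t ih =>
    rw [sum_range_succ]
    have := h t ht
    have := ih (by omega)
    omega

theorem two_pow_mul_sum_range_le_of_two_mul_le {T : ℕ → ℕ} {n : ℕ}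
    (h : ∀ j < n, 2 * T j ≤ T (j + 1)) {t s : ℕ} (hts : t + s ≤ n) :
    2 ^ s * ∑ j ∈ range (t + 1), T j ≤ 2 * T (t + s) := by
  induction s with
  | zero => simpa using sum_range_le_two_mul_of_two_mul_le h hts
  | succ s ih =>
    calc 2 ^ (s + 1) * ∑ j ∈ range (t + 1), T j
        = 2 * (2 ^ s * ∑ j ∈ range (t + 1), T j) := by ring
      _ ≤ 2 * (2 * T (t + s)) := Nat.mul_le_mul_left 2 (ih (by omega))
      _ ≤ 2 * T (t + (s + 1)) := by gcongr; exact h _ (by omega)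

theorem two_pow_mul_card_filter_card_inter_le {ι : Type*} [DecidableEq ι] {Ω B : Finset ι}
    (hB : B ⊆ Ω) {m a : ℕ} (ham : 2 * a ≤ m)
    (hratio : ∀ j < 2 * a, 2 * ((j + 1) * (#Ω - #B - (m - (j + 1)))) ≤ (#B - j) * (m - j)) :
    2 ^ a * #{S ∈ Ω.powersetCard m | #(S ∩ B) ≤ a} ≤ 2 * (#Ω).choose m := by
  set P := Ω.powersetCard m
  set T : ℕ → ℕ := fun j => (#B).choose j * (#(Ω \ B)).choose (m - j)
  have hT : ∀ j ≤ m, #{S ∈ P | #(S ∩ B) = j} = T j := fun j hj => card_filter_card_inter_eq hB hj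
  have hdouble : ∀ j < 2 * a, 2 * T j ≤ T (j + 1) := fun j hj =>
    two_mul_choose_mul_choose_le (by omega) (card_sdiff_of_subset hB ▸ hratio j hj)
  have hlow : #{S ∈ P | #(S ∩ B) ≤ a} ≤ ∑ j ∈ range (a + 1), T j := by
    rw [card_eq_sum_card_fiberwise (f := fun S => #(S ∩ B)) (t := range (a + 1))
      (fun S hS => mem_range.2 (Nat.lt_succ_of_le (mem_filter.1 hS).2))]
    refine sum_le_sum fun j hj => ?_
    rw [filter_filter, ← hT j (by have := mem_range.1 hj; omega)]
    exact card_le_card (monotone_filter_right _ fun S _ h => h.2)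
  calc 2 ^ a * #{S ∈ P | #(S ∩ B) ≤ a}
      ≤ 2 ^ a * ∑ j ∈ range (a + 1), T j := by gcongr
    _ ≤ 2 * T (a + a) := two_pow_mul_sum_range_le_of_two_mul_le hdouble (by omega)
    _ ≤ 2 * (#Ω).choose m := by
      rw [← hT _ (by omega), ← card_powersetCard]
      gcongr
      exact filter_subset _ _

theorem four_mul_le_mul_sub_two {N b k α x : ℕ} (hαk : α * k ≤ N + 1) (hbk : 16 * b ≤ k)
    (hx : N < b * (x + 2 * α)) : 4 * N ≤ x * (k - 2) := by
  have hb : 0 < b := Nat.pos_of_ne_zero (by rintro rfl; simp at hx)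
  have hαb : 16 * (α * b) ≤ N + 1 := by nlinarith
  have hbx : 14 * (N + 1) ≤ 16 * (b * x) := by nlinarith
  have hk : 14 * b ≤ k - 2 := by omega
  have := Nat.mul_le_mul hbx hk
  refine Nat.le_of_mul_le_mul_left (c := 16 * b) ?_ (by omega)
  nlinarith

theorem hypergeometric_doubling_condition {N k α b l m j : ℕ} (hm : m + 1 = α * k)
    (hbk : 16 * b ≤ k) (hmN : m ≤ N) (hl : N < b * (l + 1)) (hj : j < 2 * α) :
    2 * ((j + 1) * (N - l - (m - (j + 1)))) ≤ (l - j) * (m - j) := by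
  have hb : 0 < b := Nat.pos_of_ne_zero (by rintro rfl; simp at hl)
  have hl2α : 2 * α ≤ l + 1 := by
    have : b * (16 * α) ≤ b * (l + 1) := by nlinarith
    have := Nat.le_of_mul_le_mul_left this hb
    omega
  obtain ⟨x, hx⟩ : ∃ x, l + 1 = x + 2 * α := ⟨l + 1 - 2 * α, by omega⟩
  have hkey : 4 * N ≤ x * (k - 2) := four_mul_le_mul_sub_two (by omega) hbk (hx ▸ hl)
  have hαk : α * (k - 2) = α * k - α * 2 := Nat.mul_sub α k 2
  calc 2 * ((j + 1) * (N - l - (m - (j + 1)))) ≤ 2 * (2 * α * N) := by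
        gcongr <;> omega
    _ = α * (4 * N) := by ring
    _ ≤ α * (x * (k - 2)) := Nat.mul_le_mul_left α hkey
    _ = x * (α * (k - 2)) := by ring
    _ ≤ (l - j) * (m - j) := Nat.mul_le_mul (by omega) (by omega)

def block (N b t : ℕ) : Finset ℕ := Ioc (t * N / b) ((t + 1) * N / b)

theorem block_subset_Icc {N b t : ℕ} (ht : t < b) : block N b t ⊆ Icc 1 N := by
  intro x hx
  have hx := mem_Ioc.1 hx
  have : (t + 1) * N / b ≤ N := Nat.div_le_of_le_mul (Nat.mul_le_mul_right N ht)
  exact mem_Icc.2 ⟨Nat.zero_lt_of_lt hx.1, by omega⟩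

theorem lt_mul_card_block_add_one {N b : ℕ} (hb : 0 < b) (t : ℕ) :
    N < b * (#(block N b t) + 1) := by
  have h : t * N / b + N / b ≤ (t + 1) * N / b := by
    rw [add_mul, one_mul]; exact Nat.div_add_div_le_add_div
  have : N / b + 1 ≤ #(block N b t) + 1 := by rw [block, Nat.card_Ioc]; omega
  calc N < b * (N / b + 1) := Nat.lt_mul_div_succ N hb
    _ ≤ b * (#(block N b t) + 1) := by gcongr

theorem succ_mul_div_le (N b t : ℕ) : (t + 1) * N / b ≤ t * N / b + N / b + 1 := by
  rw [add_mul, one_mul]; exact Nat.add_div_le_div_add_div_add_one _ _ _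

theorem exists_block_subset_Ioc {N b a : ℕ} (hb : 0 < b) (h : a + 2 * (N / b + 1) ≤ N) :
    ∃ t < b, block N b t ⊆ Ioc a (a + 2 * (N / b + 1)) := by
  have hbN : b * N / b = N := Nat.mul_div_cancel_left N hb
  -- `u` is the first block whose left end is at least `a`.
  obtain ⟨u, hau, hmin⟩ : ∃ u, a ≤ u * N / b ∧ ∀ v < u, ¬ a ≤ v * N / b :=
    have hex : ∃ u, a ≤ u * N / b := ⟨b, by omega⟩
    ⟨Nat.find hex, Nat.find_spec hex, fun _ => Nat.find_min hex⟩
  have hua : u * N / b ≤ a + N / b + 1 := by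
    rcases Nat.eq_zero_or_pos u with rfl | hu
    · simp
    · have := hmin (u - 1) (by omega)
      have := succ_mul_div_le N b (u - 1)
      rw [Nat.sub_add_cancel hu] at this
      omega
  have hub : u < b := by
    by_contra! hbu
    rcases hbu.eq_or_lt with rfl | hbu
    · have := Nat.zero_le (N / b); omega
    · exact hmin b hbu (by omega)
  refine ⟨u, hub, fun x hx => ?_⟩
  have hx := mem_Ioc.1 hx
  have := succ_mul_div_le N b u
  exact mem_Ioc.2 ⟨by omega, by omega⟩

theorem lt_add_of_card_inter_Ioc_le {N b α a a' : ℕ} {S : Finset ℕ} (hb : 0 < b)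
    (hgood : ∀ t < b, α < #(S ∩ block N b t)) (hS : #(S ∩ Ioc a a') ≤ α) (ha' : a' ≤ N) :
    a' < a + 2 * (N / b + 1) := by
  by_contra! h
  obtain ⟨t, ht, hsub⟩ := exists_block_subset_Ioc hb (h.trans ha')
  have := card_le_card (inter_subset_inter_left (hsub.trans (Ioc_subset_Ioc_right h)) (s := S))
  have := hgood t ht
  omega

theorem two_pow_mul_card_filter_card_inter_block_le {N k α b m : ℕ} (hm : m + 1 = α * k)
    (hmN : m ≤ N) (hα : 2 ≤ α) (hk : 2 ≤ k) (hb : b = 1 ∨ 16 * b ≤ k) {t : ℕ} (ht : t < b) :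
    2 ^ α * #{S ∈ (Icc 1 N).powersetCard m | #(S ∩ block N b t) ≤ α} ≤ 2 * N.choose m := by
  rcases hb with rfl | hbk
  · obtain rfl : t = 0 := by omega
    suffices {S ∈ (Icc 1 N).powersetCard m | #(S ∩ block N 1 0) ≤ α} = ∅ by simp [this]
    refine filter_eq_empty_iff.2 fun S hS => ?_
    obtain ⟨hSsub, rfl⟩ := mem_powersetCard.1 hS
    rw [inter_eq_left.2 fun x hx => by
      have := mem_Icc.1 (hSsub hx)
      simp only [block, zero_mul, zero_add, one_mul, Nat.div_one, mem_Ioc]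
      omega]
    nlinarith
  · have hb : 0 < b := by omega
    simpa using two_pow_mul_card_filter_card_inter_le (block_subset_Icc ht) (m := m) (a := α)
      (by nlinarith) (by simpa using fun j hj =>
        hypergeometric_doubling_condition hm hbk hmN (lt_mul_card_block_add_one hb t) hj)

-- The decidability instances are implicit so that they unify with the classical ones of the goal.
theorem mul_card_filter_exists_lt_le {ι : Type*} {s : Finset ι} {p : ℕ → ι → Prop}
    {_ : ∀ t, DecidablePred (p t)} {a b r M : ℕ}
    (h : ∀ t < b, 2 ^ a * #{x ∈ s | p t x} ≤ 2 * M) (hr : 2 * (b * r) ≤ 2 ^ a) :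
    r * #{x ∈ s | ∃ t < b, p t x} ≤ M := by
  classical
  have hunion : #{x ∈ s | ∃ t < b, p t x} ≤ ∑ t ∈ range b, #{x ∈ s | p t x} := by
    refine (card_le_card fun x hx => ?_).trans card_biUnion_le
    obtain ⟨hxs, t, ht, hpx⟩ := mem_filter.1 hx
    exact mem_biUnion.2 ⟨t, mem_range.2 ht, mem_filter.2 ⟨hxs, hpx⟩⟩
  refine Nat.le_of_mul_le_mul_left (c := 2 ^ a) ?_ (by positivity)
  calc 2 ^ a * (r * #{x ∈ s | ∃ t < b, p t x})
      ≤ r * ∑ t ∈ range b, 2 ^ a * #{x ∈ s | p t x} := by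
        rw [← mul_sum, mul_left_comm]; gcongr
    _ ≤ r * ∑ t ∈ range b, 2 * M :=
        Nat.mul_le_mul_left r (sum_le_sum fun t ht => h t (mem_range.1 ht))
    _ = 2 * (b * r) * M := by rw [sum_const, card_range, smul_eq_mul]; ring
    _ ≤ 2 ^ a * M := by gcongr

theorem one_sub_inv_mul_card_le_card_filter {ι : Type*} {s : Finset ι} {p q : ι → Prop}
    {_ : DecidablePred p} [DecidablePred q] {r : ℕ} (hr : 0 < r) (hpq : ∀ x ∈ s, ¬ p x → q x)
    (hq : r * #{x ∈ s | q x} ≤ #s) :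
    (1 - 1 / (r : ℝ)) * #s ≤ #{x ∈ s | p x} := by
  have hsplit := card_filter_add_card_filter_not (s := s) p
  have hnot : #{x ∈ s | ¬ p x} ≤ #{x ∈ s | q x} := card_le_card (monotone_filter_right s hpq)
  have hr' : (0 : ℝ) < r := by exact_mod_cast hr
  have hneg : (#{x ∈ s | ¬ p x} : ℝ) ≤ #s / r := by
    rw [le_div_iff₀ hr', mul_comm]; exact_mod_cast (Nat.mul_le_mul_left r hnot).trans hq
  have : (#{x ∈ s | p x} : ℝ) + #{x ∈ s | ¬ p x} = #s := by exact_mod_cast hsplit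
  rw [sub_mul, one_mul, div_mul_eq_mul_div, one_mul]
  linarith

theorem two_le_of_three_mul_log_le {x : ℝ} {a : ℕ} (hx : 4 ≤ x) (h : 3 * Real.log x ≤ a) :
    2 ≤ a := by
  have h4 : Real.log 4 ≤ Real.log x := Real.log_le_log (by norm_num) hx
  have h42 : Real.log 4 = 2 * Real.log 2 := by
    rw [show (4 : ℝ) = 2 ^ 2 by norm_num, Real.log_pow]; norm_num
  have := Real.log_two_gt_d9
  have : (1 : ℝ) < a := by linarith
  exact_mod_cast this

theorem two_mul_le_two_pow_of_three_mul_log_le {x : ℝ} {a : ℕ} (hx : 0 < x) (ha : 2 ≤ a)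
    (h : 3 * Real.log x ≤ a) : 2 * x ≤ 2 ^ a := by
  have hlog2 := Real.log_two_gt_d9
  have ha' : (2 : ℝ) ≤ a := by exact_mod_cast ha
  rw [← Real.log_le_log_iff (by positivity) (by positivity), Real.log_mul two_ne_zero hx.ne',
    Real.log_pow]
  nlinarith

theorem card_filter_le_sort_getD (S : Finset ℕ) {t : ℕ} (ht : t < #S) :
    #{x ∈ S | x ≤ (S.sort (· ≤ ·)).getD t 0} = t + 1 := by
  -- `Nat.nth (· ∈ S)` lists `S` in increasing order, and `Nat.count (· ∈ S)` is its rank.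
  have hf : (Set.ofPred (· ∈ S)).Finite := S.finite_toSet
  have hS : hf.toFinset = S := S.finite_toSet_toFinset
  rw [← hS, ← Nat.nth_eq_getD_sort hf, hS, ← Nat.count_nth_succ (p := (· ∈ S)) (fun hf' => by
    rwa [S.finite_toSet_toFinset]), Nat.count_eq_card_filter_range]
  congr 1
  ext x
  simp [and_comm]

theorem mul_sub_one_lt_mul_sub_one {α j k : ℕ} (hα : 0 < α) (hj0 : j ≠ 0) (hjk : j < k) :
    j * α - 1 < α * k - 1 := by
  have := Nat.mul_lt_mul_of_pos_right hjk hα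
  have := Nat.mul_pos (Nat.pos_of_ne_zero hj0) hα
  rw [mul_comm α k]
  omega

section Pivots

variable {N k α : ℕ} {S : Finset ℕ}

theorem card_filter_le_pivot (hS : S ⊆ Icc 1 N) (hcard : #S = α * k - 1) (hα : 0 < α)
    {j : ℕ} (hjk : j < k) : #{x ∈ S | x ≤ pivot N k α S j} = j * α := by
  by_cases hj0 : j = 0
  · simp only [pivot, hj0, if_true, zero_mul, card_eq_zero, filter_eq_empty_iff]
    exact fun x hx => by have := (mem_Icc.1 (hS hx)).1; omega
  · have hidx := mul_sub_one_lt_mul_sub_one hα hj0 hjk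
    rw [pivot, if_neg hj0, if_neg hjk.ne, card_filter_le_sort_getD S (hcard ▸ hidx)]
    have := Nat.mul_pos (Nat.pos_of_ne_zero hj0) hα
    omega

theorem pivot_le (hS : S ⊆ Icc 1 N) (hcard : #S = α * k - 1) (hα : 0 < α) {j : ℕ}
    (hjk : j ≤ k) : pivot N k α S j ≤ N := by
  unfold pivot
  split_ifs with hj0 hjk'
  · exact Nat.zero_le N
  · exact le_rfl
  · have hidx : j * α - 1 < (S.sort (· ≤ ·)).length := by
      rw [length_sort, hcard]; exact mul_sub_one_lt_mul_sub_one hα hj0 (by omega)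
    rw [List.getD_eq_getElem _ _ hidx]
    exact (mem_Icc.1 (hS ((mem_sort _).1 (List.getElem_mem hidx)))).2

theorem card_inter_Ioc_pivot_le (hS : S ⊆ Icc 1 N) (hcard : #S = α * k - 1) (hα : 0 < α)
    {i : ℕ} (hik : i < k) : #(S ∩ Ioc (pivot N k α S i) (pivot N k α S (i + 1))) ≤ α := by
  set p := pivot N k α S i
  set p' := pivot N k α S (i + 1)
  rcases le_or_gt p p' with hpp' | hpp'
  · have hsplit : #{x ∈ S | x ≤ p'} = #{x ∈ S | x ≤ p} + #(S ∩ Ioc p p') := by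
      rw [← card_union_of_disjoint]
      · congr 1; ext x; simp only [mem_filter, mem_union, mem_inter, mem_Ioc]; grind
      · exact disjoint_left.2 fun x h h' => by
          simp only [mem_filter, mem_inter, mem_Ioc] at h h'; omega
    have hp : #{x ∈ S | x ≤ p} = i * α := card_filter_le_pivot hS hcard hα hik
    have hp' : #{x ∈ S | x ≤ p'} ≤ (i + 1) * α := by
      rcases (Nat.add_one_le_of_lt hik).eq_or_lt with hk | hk
      · calc #{x ∈ S | x ≤ p'} ≤ #S := card_filter_le _ _
          _ ≤ (i + 1) * α := by rw [hcard, ← hk, mul_comm]; omega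
      · exact (card_filter_le_pivot hS hcard hα hk).le
    rw [add_mul, one_mul] at hp'
    omega
  · simp [Ioc_eq_empty_of_le hpp'.le]

theorem card_bucket_mul_le {b : ℕ} (hS : S ⊆ Icc 1 N) (hcard : #S = α * k - 1) (hα : 0 < α)
    (hb : 0 < b) (hkb : k ≤ 32 * b) (hbN : b ≤ N)
    (hgood : ∀ t < b, α < #(S ∩ block N b t)) {i : ℕ} (hi : i ∈ Icc 1 k) :
    #{v ∈ Icc 1 N | pivot N k α S (i - 1) < v ∧ v ≤ pivot N k α S i} * k ≤ 96 * N := by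
  obtain ⟨hi1, hik⟩ := mem_Icc.1 hi
  obtain ⟨i, rfl⟩ : ∃ i', i = i' + 1 := ⟨i - 1, by omega⟩
  rw [Nat.add_sub_cancel]
  have hgap := lt_add_of_card_inter_Ioc_le hb hgood (card_inter_Ioc_pivot_le hS hcard hα hik)
    (pivot_le hS hcard hα hik)
  have hbucket : #{v ∈ Icc 1 N | pivot N k α S i < v ∧ v ≤ pivot N k α S (i + 1)}
      ≤ pivot N k α S (i + 1) - pivot N k α S i := by
    rw [← Nat.card_Ioc]
    exact card_le_card fun v hv => mem_Ioc.2 (mem_filter.1 hv).2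
  have := Nat.mul_div_le N b
  calc #{v ∈ Icc 1 N | pivot N k α S i < v ∧ v ≤ pivot N k α S (i + 1)} * k
      ≤ (2 * (N / b) + 1) * (32 * b) := Nat.mul_le_mul (by omega) hkb
    _ = 64 * (b * (N / b)) + 32 * b := by ring
    _ ≤ 96 * N := by omega

end Pivots

end Oversampling

open Oversampling

/-- Oversampling lemma: there are absolute constants `C, c ≥ 1` such that for all integers
`N, k, α, r` with `k ≥ 2`, `r ≥ 2`, `α ≥ C·ln(k·r)` and `α·k - 1 ≤ N`, a uniformly random
subset `S` of `{1,…,N}` of size `α·k - 1` has the following property with probability at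
least `1 - 1/r` (stated by counting subsets): every bucket
`B i = {v ∈ {1,…,N} : s (i-1) < v ≤ s i}`, `i = 1,…,k`, determined by the equidistant
pivots of the sorted sample, has size at most `c·N/k`. -/
theorem stmt_0 :
    ∃ C c : ℝ, 1 ≤ C ∧ 1 ≤ c ∧
      ∀ N k α r : ℕ, 2 ≤ k → 2 ≤ r →
        C * Real.log ((k : ℝ) * (r : ℝ)) ≤ (α : ℝ) → α * k - 1 ≤ N →
        (1 - 1 / (r : ℝ)) * (((Finset.Icc 1 N).powersetCard (α * k - 1)).card : ℝ) ≤
          ((((Finset.Icc 1 N).powersetCard (α * k - 1)).filter fun S =>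
              ∀ i ∈ Finset.Icc 1 k,
                ((((Finset.Icc 1 N).filter fun v =>
                      pivot N k α S (i - 1) < v ∧ v ≤ pivot N k α S i).card : ℝ)
                  ≤ c * (N : ℝ) / (k : ℝ))).card : ℝ) := by
  refine ⟨3, 96, by norm_num, by norm_num, fun N k α r hk hr hlog hN => ?_⟩
  have hkr : (4 : ℝ) ≤ k * r := by exact_mod_cast Nat.mul_le_mul hk hr
  have hα : 2 ≤ α := two_le_of_three_mul_log_le hkr hlog
  have hpow : 2 * (k * r) ≤ 2 ^ α := by
    exact_mod_cast two_mul_le_two_pow_of_three_mul_log_le (by linarith) hα hlog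
  have hm : α * k - 1 + 1 = α * k := Nat.sub_add_cancel (by nlinarith)
  set b := (k + 31) / 32
  obtain ⟨hb, hbk, hkb, hb16⟩ : 0 < b ∧ b ≤ k ∧ k ≤ 32 * b ∧ (b = 1 ∨ 16 * b ≤ k) := by omega
  have hbad : r * #{S ∈ (Icc 1 N).powersetCard (α * k - 1) | ∃ t < b, #(S ∩ block N b t) ≤ α}
      ≤ #((Icc 1 N).powersetCard (α * k - 1)) := by
    rw [card_powersetCard, Nat.card_Icc, Nat.add_sub_cancel]
    exact mul_card_filter_exists_lt_le (p := fun t S => #(S ∩ block N b t) ≤ α)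
      (fun t ht => two_pow_mul_card_filter_card_inter_block_le hm hN hα hk hb16 ht)
      (le_trans (by gcongr) hpow)
  refine one_sub_inv_mul_card_le_card_filter (by omega) (fun S hS hbucket => ?_) hbad
  by_contra! hgood
  obtain ⟨hSsub, hScard⟩ := mem_powersetCard.1 hS
  refine hbucket fun i hi => (le_div_iff₀ (by positivity)).2 ?_
  exact_mod_cast card_bucket_mul_le hSsub hScard (by omega) hb hkb (by nlinarith) hgood hi
end

section
/- Let d ≥ 1 be an integer and k = 2^d. For j ∈ {1,…,k−1} let ℓ(j) = ⌊log₂ j⌋ and define index(j) = (2(j − 2^{ℓ(j)}) + 1)·2^{d − ℓ(j) − 1}. Then: (a) index is a bijection from {1,…,k−1} to {1,…,k−1}; and (b) for every j ∈ {1,…,k−1}, the set {index(j') : j' ∈ {1,…,k−1} and ⌊j'/2^q⌋ = j for some integer q ≥ 0} is exactly the set of integers m with index(j) − 2^{d−ℓ(j)−1} < m < index(j) + 2^{d−ℓ(j)−1}. -/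
/-!
Write a node as `j = 2^ℓ + r` with `r < 2^ℓ`, so that `ℓ = ⌊log₂ j⌋`, and put `c = d - ℓ - 1`;
then `index j = (2r + 1)·2^c`. The descendants of `j` at depth `q ≤ c` are the nodes `j·2^q + s`
with `s < 2^q`, and their indices are `2r·2^c + (2s + 1)·2^(c-q)`. Every `t ∈ (0, 2^(c+1))` is
`(2s + 1)·2^e` with `e ≤ c` and `s < 2^(c-e)` (split off its odd part), so the subtree of `j` is
sent exactly onto the open interval `(2r·2^c, 2r·2^c + 2^(c+1))`. For the root this interval is
`{1, …, k-1}`, and a surjection of a finite set onto itself is a bijection.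
-/

namespace HeapLayout

open Set

theorem log_two_pow_add {ℓ r : ℕ} (hr : r < 2 ^ ℓ) : Nat.log 2 (2 ^ ℓ + r) = ℓ :=
  Nat.log_eq_of_pow_le_of_lt_pow (Nat.le_add_right _ _) (by rw [pow_succ]; omega)

theorem exists_eq_two_pow_add {j : ℕ} (hj : j ≠ 0) : ∃ ℓ r, r < 2 ^ ℓ ∧ j = 2 ^ ℓ + r := by
  have hlt := Nat.lt_pow_succ_log_self one_lt_two j
  have hle := Nat.pow_log_le_self 2 hj
  rw [pow_succ] at hlt
  exact ⟨Nat.log 2 j, j - 2 ^ Nat.log 2 j, by omega, by omega⟩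

theorem two_pow_add_lt_two_pow_iff {ℓ r d : ℕ} (hr : r < 2 ^ ℓ) : 2 ^ ℓ + r < 2 ^ d ↔ ℓ < d := by
  rw [← Nat.log_lt_iff_lt_pow one_lt_two (by positivity), log_two_pow_add hr]

theorem div_eq_iff_exists_mul_add {n j j' : ℕ} (hn : 0 < n) :
    j' / n = j ↔ ∃ s < n, j' = j * n + s := by
  constructor
  · rintro rfl
    exact ⟨j' % n, Nat.mod_lt _ hn, (Nat.div_add_mod' j' _).symm⟩
  · rintro ⟨s, hs, rfl⟩
    rw [Nat.add_comm, Nat.add_mul_div_right _ _ hn, Nat.div_eq_of_lt hs, zero_add]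

theorem mul_two_pow_add_lt {ℓ r q s : ℕ} (hr : r < 2 ^ ℓ) (hs : s < 2 ^ q) :
    r * 2 ^ q + s < 2 ^ (ℓ + q) := by
  rw [pow_add]
  linarith [Nat.add_mul_lt_mul_of_lt_of_lt hs hr]

theorem descendant_lt_two_pow_iff {ℓ r q s d : ℕ} (hr : r < 2 ^ ℓ) (hs : s < 2 ^ q) :
    (2 ^ ℓ + r) * 2 ^ q + s < 2 ^ d ↔ ℓ + q < d := by
  rw [show (2 ^ ℓ + r) * 2 ^ q + s = 2 ^ (ℓ + q) + (r * 2 ^ q + s) by ring,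
    two_pow_add_lt_two_pow_iff (mul_two_pow_add_lt hr hs)]

theorem odd_mul_two_pow_lt {q e s : ℕ} (hs : s < 2 ^ q) : (2 * s + 1) * 2 ^ e < 2 ^ (q + e + 1) :=
  calc (2 * s + 1) * 2 ^ e < 2 ^ (q + 1) * 2 ^ e :=
        Nat.mul_lt_mul_of_pos_right (by rw [pow_succ]; omega) (by positivity)
    _ = 2 ^ (q + e + 1) := by ring

theorem exists_eq_odd_mul_two_pow {c t : ℕ} (ht : t ∈ Ioo 0 (2 ^ (c + 1))) :
    ∃ q e s, q + e = c ∧ s < 2 ^ q ∧ t = (2 * s + 1) * 2 ^ e := by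
  obtain ⟨e, _, ⟨s, rfl⟩, rfl⟩ := Nat.exists_eq_two_pow_mul_odd ht.1.ne'
  have hlt : 2 ^ e * (2 * s + 1) < 2 ^ (c + 1) := ht.2
  have hec : e ≤ c := by
    have : 2 ^ e < 2 ^ (c + 1) := lt_of_le_of_lt (Nat.le_mul_of_pos_right _ (by omega)) hlt
    have := (Nat.pow_lt_pow_iff_right one_lt_two).1 this
    omega
  refine ⟨c - e, e, s, by omega, ?_, mul_comm _ _⟩
  rw [show c + 1 = e + (c - e + 1) by omega, pow_add, pow_succ] at hlt
  have := Nat.lt_of_mul_lt_mul_left hlt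
  omega

def heapIndex (d j : ℕ) : ℕ := (2 * (j - 2 ^ Nat.log 2 j) + 1) * 2 ^ (d - Nat.log 2 j - 1)

def subtree (d j : ℕ) : Set ℕ := {j' ∈ Icc 1 (2 ^ d - 1) | ∃ q, j' / 2 ^ q = j}

theorem heapIndex_two_pow_add {d ℓ r : ℕ} (hr : r < 2 ^ ℓ) :
    heapIndex d (2 ^ ℓ + r) = (2 * r + 1) * 2 ^ (d - ℓ - 1) := by
  rw [heapIndex, log_two_pow_add hr, Nat.add_sub_cancel_left]

theorem heapIndex_descendant {d ℓ r q e s : ℕ} (hr : r < 2 ^ ℓ) (hs : s < 2 ^ q)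
    (hd : ℓ + q + e + 1 = d) :
    heapIndex d ((2 ^ ℓ + r) * 2 ^ q + s) = 2 * r * 2 ^ (q + e) + (2 * s + 1) * 2 ^ e := by
  rw [show (2 ^ ℓ + r) * 2 ^ q + s = 2 ^ (ℓ + q) + (r * 2 ^ q + s) by ring,
    heapIndex_two_pow_add (mul_two_pow_add_lt hr hs), show d - (ℓ + q) - 1 = e by omega]
  ring

theorem mem_subtree_iff {d ℓ r j' : ℕ} (hr : r < 2 ^ ℓ) :
    j' ∈ subtree d (2 ^ ℓ + r) ↔ ∃ q, ℓ + q < d ∧ ∃ s < 2 ^ q, j' = (2 ^ ℓ + r) * 2 ^ q + s := by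
  have hpow := Nat.one_le_two_pow (n := d)
  constructor
  · rintro ⟨⟨-, hj'⟩, q, hq⟩
    obtain ⟨s, hs, rfl⟩ := (div_eq_iff_exists_mul_add (by positivity)).1 hq
    exact ⟨q, (descendant_lt_two_pow_iff hr hs).1 (by omega), s, hs, rfl⟩
  · rintro ⟨q, hq, s, hs, rfl⟩
    have hlt := (descendant_lt_two_pow_iff hr hs).2 hq
    have hpos : 0 < (2 ^ ℓ + r) * 2 ^ q := by positivity
    exact ⟨⟨by omega, by omega⟩, q, (div_eq_iff_exists_mul_add (by positivity)).2 ⟨s, hs, rfl⟩⟩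

theorem image_heapIndex_subtree {d ℓ r c : ℕ} (hr : r < 2 ^ ℓ) (hd : ℓ + c + 1 = d) :
    heapIndex d '' subtree d (2 ^ ℓ + r) =
      Ioo (2 * r * 2 ^ c) (2 * r * 2 ^ c + 2 ^ (c + 1)) := by
  ext m
  simp only [mem_image, mem_subtree_iff hr]
  constructor
  · rintro ⟨_, ⟨q, hq, s, hs, rfl⟩, rfl⟩
    have hc : q + (c - q) = c := by omega
    rw [heapIndex_descendant (e := c - q) hr hs (by omega), hc]
    have hlt := odd_mul_two_pow_lt (e := c - q) hs
    have hpos : 0 < (2 * s + 1) * 2 ^ (c - q) := by positivity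
    rw [hc] at hlt
    exact ⟨by omega, by omega⟩
  · rintro ⟨hlo, hhi⟩
    obtain ⟨q, e, s, rfl, hs, ht⟩ :=
      exists_eq_odd_mul_two_pow (c := c) (t := m - 2 * r * 2 ^ c) ⟨by omega, by omega⟩
    refine ⟨_, ⟨q, by omega, s, hs, rfl⟩, ?_⟩
    rw [heapIndex_descendant (e := e) hr hs (by omega)]
    omega

theorem image_heapIndex_subtree_eq_Ioo {d j : ℕ} (hj : j ∈ Icc 1 (2 ^ d - 1)) :
    heapIndex d '' subtree d j = Ioo (heapIndex d j - 2 ^ (d - Nat.log 2 j - 1))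
      (heapIndex d j + 2 ^ (d - Nat.log 2 j - 1)) := by
  obtain ⟨ℓ, r, hr, rfl⟩ := exists_eq_two_pow_add (by grind : j ≠ 0)
  have hℓ := (two_pow_add_lt_two_pow_iff (d := d) hr).1 (by grind)
  rw [image_heapIndex_subtree hr (c := d - ℓ - 1) (by omega), heapIndex_two_pow_add hr,
    log_two_pow_add hr, add_mul, one_mul, pow_succ]
  congr 1 <;> omega

theorem subtree_one (d : ℕ) : subtree d 1 = Icc 1 (2 ^ d - 1) := by
  refine sep_eq_self_iff_mem_true.2 fun j hj => ?_
  obtain ⟨ℓ, r, hr, rfl⟩ := exists_eq_two_pow_add (by grind : j ≠ 0)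
  exact ⟨ℓ, (div_eq_iff_exists_mul_add (by positivity)).2 ⟨r, hr, by ring⟩⟩

theorem image_heapIndex_Icc (d : ℕ) : heapIndex d '' Icc 1 (2 ^ d - 1) = Icc 1 (2 ^ d - 1) := by
  cases d with
  | zero => simp
  | succ c =>
    have h := image_heapIndex_subtree (ℓ := 0) (r := 0) (c := c) (d := c + 1) one_pos (by omega)
    rw [pow_zero, add_zero, subtree_one] at h
    rw [h]
    ext m
    simp only [mem_Ioo, mem_Icc]
    omega

end HeapLayout

theorem stmt_2_general (d : ℕ) (k : ℕ) (hk : k = 2 ^ d)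
    (index : ℕ → ℕ)
    (hindex : ∀ j, index j = (2 * (j - 2 ^ Nat.log 2 j) + 1) * 2 ^ (d - Nat.log 2 j - 1)) :
    Set.BijOn index (Set.Icc 1 (k - 1)) (Set.Icc 1 (k - 1)) ∧
      ∀ j ∈ Set.Icc 1 (k - 1),
        {m : ℕ | ∃ j' ∈ Set.Icc 1 (k - 1), (∃ q : ℕ, j' / 2 ^ q = j) ∧ index j' = m} =
          {m : ℕ | index j - 2 ^ (d - Nat.log 2 j - 1) < m ∧
            m < index j + 2 ^ (d - Nat.log 2 j - 1)} := by
  subst hk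
  obtain rfl : index = HeapLayout.heapIndex d := funext hindex
  obtain ⟨hsurj, hmaps⟩ := Set.image_eq_iff_surjOn_mapsTo.1 (HeapLayout.image_heapIndex_Icc d)
  refine ⟨((Set.finite_Icc _ _).surjOn_iff_bijOn_of_mapsTo hmaps).1 hsurj, fun j hj => ?_⟩
  ext m
  simpa [HeapLayout.subtree, and_assoc] using
    Set.ext_iff.1 (HeapLayout.image_heapIndex_subtree_eq_Ioo hj) m

/-- Correctness of the breadth-first (heap) layout of the `k - 1 = 2^d - 1` pivots in the
complete binary search tree of super scalar samplesort: with `ℓ j = ⌊log₂ j⌋` and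
`index j = (2(j - 2^(ℓ j)) + 1)·2^(d - ℓ j - 1)`,
(a) `index` is a bijection of `{1,…,k-1}` onto itself, and
(b) for every node `j ∈ {1,…,k-1}`, the indices stored in the subtree rooted at `j`
(the nodes `j'` with `⌊j'/2^q⌋ = j` for some `q ≥ 0`) are exactly the integers `m` with
`index j - 2^(d - ℓ j - 1) < m < index j + 2^(d - ℓ j - 1)`. -/
theorem stmt_2 (d : ℕ) (hd : 1 ≤ d) (k : ℕ) (hk : k = 2 ^ d)
    (index : ℕ → ℕ)
    (hindex : ∀ j, index j = (2 * (j - 2 ^ Nat.log 2 j) + 1) * 2 ^ (d - Nat.log 2 j - 1)) :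
    Set.BijOn index (Set.Icc 1 (k - 1)) (Set.Icc 1 (k - 1)) ∧
      ∀ j ∈ Set.Icc 1 (k - 1),
        {m : ℕ | ∃ j' ∈ Set.Icc 1 (k - 1), (∃ q : ℕ, j' / 2 ^ q = j) ∧ index j' = m} =
          {m : ℕ | index j - 2 ^ (d - Nat.log 2 j - 1) < m ∧
            m < index j + 2 ^ (d - Nat.log 2 j - 1)} :=
  stmt_2_general d k hk index hindex
end

section
/- Let d ≥ 1 be an integer, k = 2^d, and let s_1 < s_2 < … < s_{k−1} be strictly increasing real numbers. For j ∈ {1,…,k−1} let ℓ(j) = ⌊log₂ j⌋, define index(j) = (2(j − 2^{ℓ(j)}) + 1)·2^{d − ℓ(j) − 1}, and set a_j = s_{index(j)}. For a real number e define j_0 = 1 and j_{m+1} = 2·j_m + (1 if a_{j_m} ≤ e, else 0) for m = 0,…,d−1. Then j_d = k + |{i ∈ {1,…,k−1} : s_i ≤ e}|; in other words, j_d − k is exactly the index i ∈ {0,…,k−1} of the bucket B_i = {x : s_i ≤ x < s_{i+1}} (with the conventions s_0 = −∞ and s_k = +∞) containing e. -/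
/-!
Let `r` be the number of pivots `≤ e`. By monotonicity, `s i ≤ e` holds exactly for `i ≤ r`,
so comparing `e` with the pivot `s (index j)` is comparing `index j` with `r`. The node on
level `m` is `j = 2^m + t` with `t < 2^m`, whose pivot index is `(2t+1)·2^(d-m-1)`; by
induction `t = r / 2^(d-m)`, since comparing `(2t+1)·2^(d-m-1)` with `r` reads off the next
binary digit of `r`. At the leaves (`m = d`) this gives `J d = 2^d + r`.
-/

open Finset

theorem MonotoneOn.le_iff_le_card_filter {α : Type*} [Preorder α] {s : ℕ → α} {n : ℕ} {e : α}
    [DecidablePred fun j => s j ≤ e] (hs : MonotoneOn s (Set.Icc 1 n)) {i : ℕ} (hi : i ∈ Icc 1 n) :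
    s i ≤ e ↔ i ≤ #{j ∈ Icc 1 n | s j ≤ e} := by
  rw [mem_Icc] at hi
  constructor
  · intro hie
    have hsub : Icc 1 i ⊆ {j ∈ Icc 1 n | s j ≤ e} := fun j hj => by
      rw [mem_Icc] at hj
      have hjn : j ∈ Set.Icc 1 n := ⟨hj.1, hj.2.trans hi.2⟩
      exact mem_filter.2 ⟨mem_Icc.2 hjn, (hs hjn hi hj.2).trans hie⟩
    simpa using card_le_card hsub
  · intro hir
    by_contra hie
    have hsub : {j ∈ Icc 1 n | s j ≤ e} ⊆ Icc 1 (i - 1) := fun j hj => by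
      obtain ⟨hj, hje⟩ := mem_filter.1 hj
      rw [mem_Icc] at hj ⊢
      refine ⟨hj.1, Nat.le_sub_one_of_lt (lt_of_not_ge fun hij => hie ?_)⟩
      exact (hs hi hj hij).trans hje
    have hcard := card_le_card hsub
    simp only [Nat.card_Icc] at hcard
    omega

def heapPivotIndex (d j : ℕ) : ℕ :=
  (2 * (j - 2 ^ Nat.log 2 j) + 1) * 2 ^ (d - Nat.log 2 j - 1)

theorem heapPivotIndex_two_pow_add {d m t : ℕ} (ht : t < 2 ^ m) :
    heapPivotIndex d (2 ^ m + t) = (2 * t + 1) * 2 ^ (d - m - 1) := by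
  have hlog : Nat.log 2 (2 ^ m + t) = m :=
    Nat.log_eq_of_pow_le_of_lt_pow (by omega) (by rw [pow_succ]; omega)
  simp [heapPivotIndex, hlog]

theorem heapPivotIndex_mem_Icc {d j : ℕ} (hj₀ : 0 < j) (hj : j < 2 ^ d) :
    heapPivotIndex d j ∈ Icc 1 (2 ^ d - 1) := by
  have hlow : 2 ^ Nat.log 2 j ≤ j := Nat.pow_log_le_self 2 hj₀.ne'
  have hhigh : j < 2 ^ (Nat.log 2 j + 1) := Nat.lt_pow_succ_log_self one_lt_two j
  have hmd : Nat.log 2 j < d := Nat.log_lt_of_lt_pow hj₀.ne' hj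
  generalize Nat.log 2 j = m at hlow hhigh hmd
  obtain ⟨t, rfl⟩ := Nat.exists_eq_add_of_le hlow
  rw [heapPivotIndex_two_pow_add (by rw [pow_succ] at hhigh; omega), mem_Icc]
  have hsplit : 2 ^ d = 2 ^ (m + 1) * 2 ^ (d - m - 1) := by rw [← pow_add]; congr 1; omega
  have hq : 0 < 2 ^ (d - m - 1) := by positivity
  constructor
  · exact Nat.mul_pos (by omega) hq
  · have hle : (2 * t + 2) * 2 ^ (d - m - 1) ≤ 2 ^ (m + 1) * 2 ^ (d - m - 1) :=
      Nat.mul_le_mul_right _ (by rw [pow_succ]; omega)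
    have hmid : (2 * t + 1) * 2 ^ (d - m - 1) + 2 ^ (d - m - 1) = (2 * t + 2) * 2 ^ (d - m - 1) := by
      ring
    omega

/-- Dividing by `q` instead of `2q` appends one binary digit, decided by comparing with
the midpoint `(2⌊r/2q⌋+1)·q`. -/
theorem Nat.div_eq_two_mul_div_add_ite (r : ℕ) {q : ℕ} (hq : 0 < q) :
    r / q = 2 * (r / (2 * q)) + if (2 * (r / (2 * q)) + 1) * q ≤ r then 1 else 0 := by
  rw [mul_comm 2 q, ← Nat.div_div_eq_div_mul]
  have := Nat.div_add_mod (r / q) 2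
  split_ifs with h <;> rw [← Nat.le_div_iff_mul_le hq] at h <;> omega

theorem heap_descent_eq_two_pow_add_div {d r : ℕ} (hr : r < 2 ^ d) {P : ℕ → Prop} [DecidablePred P]
    (hP : ∀ j, 0 < j → j < 2 ^ d → (P j ↔ heapPivotIndex d j ≤ r))
    {J : ℕ → ℕ} (hJ0 : J 0 = 1) (hJ : ∀ m < d, J (m + 1) = 2 * J m + if P (J m) then 1 else 0)
    {m : ℕ} (hm : m ≤ d) : J m = 2 ^ m + r / 2 ^ (d - m) := by
  induction m with
  | zero => simp [hJ0, Nat.div_eq_of_lt hr]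
  | succ m ih =>
    have hsplit : 2 ^ (d - m) = 2 * 2 ^ (d - (m + 1)) := by rw [← pow_succ']; congr 1; omega
    set q := 2 ^ (d - (m + 1))
    have hbit := Nat.div_eq_two_mul_div_add_ite r (by positivity : 0 < q)
    set t := r / (2 * q)
    have ht : t < 2 ^ m := Nat.div_lt_of_lt_mul <| by
      rw [← hsplit, ← pow_add, Nat.sub_add_cancel (by omega)]; exact hr
    have hJm : J m = 2 ^ m + t := by rw [ih (Nat.le_of_succ_le hm), hsplit]
    have hJd : J m < 2 ^ d := by
      calc J m < 2 ^ m + 2 ^ m := by omega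
        _ = 2 ^ (m + 1) := by rw [pow_succ]; ring
        _ ≤ 2 ^ d := Nat.pow_le_pow_right two_pos hm
    have hPJ : P (J m) ↔ (2 * t + 1) * q ≤ r := by
      rw [hP (J m) (by rw [hJm]; positivity) hJd, hJm, heapPivotIndex_two_pow_add ht]; rfl
    rw [hJ m hm, hbit]
    simp only [hPJ]
    rw [hJm, pow_succ]
    ring

theorem stmt_3_general (d : ℕ) (k : ℕ) (hk : k = 2 ^ d)
    (s : ℕ → ℝ) (hs : StrictMonoOn s (Set.Icc 1 (k - 1))) (e : ℝ)
    (index : ℕ → ℕ)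
    (hindex : ∀ j, index j = (2 * (j - 2 ^ Nat.log 2 j) + 1) * 2 ^ (d - Nat.log 2 j - 1))
    (a : ℕ → ℝ) (ha : ∀ j, a j = s (index j))
    (J : ℕ → ℕ) (hJ0 : J 0 = 1)
    (hJ : ∀ m < d, J (m + 1) = 2 * J m + if a (J m) ≤ e then 1 else 0) :
    J d = k + ((Finset.Icc 1 (k - 1)).filter fun i => s i ≤ e).card := by
  subst hk
  set r := #{i ∈ Icc 1 (2 ^ d - 1) | s i ≤ e}
  have hr : r < 2 ^ d := by
    have hcard := card_filter_le (Icc 1 (2 ^ d - 1)) (fun i => s i ≤ e)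
    simp only [Nat.card_Icc] at hcard
    have hpos := Nat.one_le_two_pow (n := d)
    omega
  have hP : ∀ j, 0 < j → j < 2 ^ d → (a j ≤ e ↔ heapPivotIndex d j ≤ r) := fun j hj₀ hj => by
    rw [ha, hindex]
    exact hs.monotoneOn.le_iff_le_card_filter (heapPivotIndex_mem_Icc hj₀ hj)
  simpa using heap_descent_eq_two_pow_add_div hr hP hJ0 hJ le_rfl

/-- Correctness of branch-free element classification in super scalar samplesort.
The `k - 1 = 2^d - 1` strictly increasing pivots `s 1 < … < s (k-1)` are stored in
heap layout `a j = s (index j)` with `index j = (2(j - 2^(ℓ j)) + 1)·2^(d - ℓ j - 1)`,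
`ℓ j = ⌊log₂ j⌋`. Starting from `J 0 = 1` and repeatedly setting
`J (m+1) = 2·J m + (1 if a (J m) ≤ e else 0)`, after `d` steps the reached leaf satisfies
`J d = k + |{i ∈ {1,…,k-1} : s i ≤ e}|`, i.e. `J d - k` is the index of the bucket
containing `e` (with respect to `s 0 = -∞`, `s k = +∞`). -/
theorem stmt_3 (d : ℕ) (hd : 1 ≤ d) (k : ℕ) (hk : k = 2 ^ d)
    (s : ℕ → ℝ) (hs : StrictMonoOn s (Set.Icc 1 (k - 1))) (e : ℝ)
    (index : ℕ → ℕ)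
    (hindex : ∀ j, index j = (2 * (j - 2 ^ Nat.log 2 j) + 1) * 2 ^ (d - Nat.log 2 j - 1))
    (a : ℕ → ℝ) (ha : ∀ j, a j = s (index j))
    (J : ℕ → ℕ) (hJ0 : J 0 = 1)
    (hJ : ∀ m < d, J (m + 1) = 2 * J m + if a (J m) ≤ e then 1 else 0) :
    J d = k + ((Finset.Icc 1 (k - 1)).filter fun i => s i ≤ e).card :=
  stmt_3_general d k hk s hs e index hindex a ha J hJ0 hJ
end

section
/- There is an absolute constant c > 0 with the following property. Let N, k, α be integers with k ≥ 2 and α ≥ 1, and let x_1, …, x_N be real numbers. Suppose a value v satisfies |{j ∈ {1,…,N} : x_j = v}| ≥ 2N/k. Draw m = αk − 1 indices J_1, …, J_m independently and uniformly at random from {1,…,N}. Then with probability at least 1 − e^{−cα}, at least α of the sampled values x_{J_1}, …, x_{J_m} equal v, and hence v is one of the equidistant pivots y_α, y_{2α}, …, y_{(k−1)α} of the sorted sample y_1 ≤ … ≤ y_{αk−1} obtained by sorting x_{J_1}, …, x_{J_m}. -/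
/-!
Let `ρ ≥ 2/k` be the frequency of `v` and `H` the number of draws hitting `v`. The exponential
moment `E[2^(-H)] = (1 - ρ/2)^(αk-1)` is at most `e^(1/2-α)`, so by Markov's inequality
`P(H < α) ≤ 2^(α-1) e^(1/2-α) ≤ e^(-(1 - log 2) α)`, using `log 2 ≥ 1/2`.
If `H ≥ α`, the copies of `v` fill a block of at least `α` consecutive positions of the sorted
sample, so the block contains some position `iα` (1-based), and `i ≤ k-1` because the sample has
only `αk - 1` elements.
-/

attribute [local instance] Classical.propDecidable

open Finset Real

namespace List

variable {β : Type*} [LinearOrder β] {l : List β} {v : β}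

theorem countP_le_eq_countP_lt_add_count (l : List β) (v : β) :
    l.countP (· ≤ v) = l.countP (· < v) + l.count v := by
  induction l with
  | nil => rfl
  | cons a l ih =>
    simp only [countP_cons, count_cons, ih]
    rcases lt_trichotomy a v with h | rfl | h
    · simp [h.le, h, h.ne]; omega
    · simp; omega
    · simp [not_le.2 h, not_lt.2 h.le, h.ne']

theorem SortedLE.countP_le_le_of_lt_getElem (hl : l.SortedLE) {q : ℕ} (hq : q < l.length)
    (h : v < l[q]) : l.countP (· ≤ v) ≤ q := by
  have hdrop : (l.drop q).countP (· ≤ v) = 0 := by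
    refine countP_eq_zero.2 fun a ha => ?_
    obtain ⟨i, hi, rfl⟩ := mem_drop_iff_getElem.1 ha
    have : l[q] ≤ l[q + i] := hl.getElem_le_getElem_of_le (by omega)
    simpa using h.trans_le this
  calc l.countP (· ≤ v) = (l.take q).countP (· ≤ v) + (l.drop q).countP (· ≤ v) := by
        rw [← countP_append, take_append_drop]
    _ ≤ q := by rw [hdrop]; exact countP_le_length.trans (by simp)

theorem SortedLE.lt_countP_lt_of_getElem_lt (hl : l.SortedLE) {q : ℕ} (hq : q < l.length)
    (h : l[q] < v) : q < l.countP (· < v) := by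
  have htake : (l.take (q + 1)).countP (· < v) = q + 1 := by
    rw [countP_eq_length.2 fun a ha => ?_, length_take]
    · omega
    obtain ⟨i, hi, rfl⟩ := mem_take_iff_getElem.1 ha
    have : l[i] ≤ l[q] := hl.getElem_le_getElem_of_le (by omega)
    simpa using this.trans_lt h
  calc q < (l.take (q + 1)).countP (· < v) := by omega
    _ ≤ l.countP (· < v) := (take_sublist _ _).countP_le

theorem SortedLE.getElem_eq_of_countP_lt_le (hl : l.SortedLE) {q : ℕ} (hq : q < l.length)
    (hlt : l.countP (· < v) ≤ q) (hle : q < l.countP (· ≤ v)) : l[q] = v :=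
  le_antisymm (not_lt.1 fun h => (hl.countP_le_le_of_lt_getElem hq h).not_gt hle)
    (not_lt.1 fun h => (hl.lt_countP_lt_of_getElem_lt hq h).not_ge hlt)

theorem SortedLE.exists_getD_mul_sub_one_eq (hl : l.SortedLE) {α k : ℕ} (hα : 0 < α)
    (hlen : l.length = α * k - 1) (hv : α ≤ l.count v) (d : β) :
    ∃ i ∈ Icc 1 (k - 1), l.getD (i * α - 1) d = v := by
  -- `i = ⌊#{< v} / α⌋ + 1` puts position `iα - 1` inside the block of copies of `v`
  set below := l.countP (· < v)
  have hbelow : below < (below / α + 1) * α := by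
    rw [add_one_mul]; exact Nat.lt_div_mul_add hα
  have habove : (below / α + 1) * α ≤ l.countP (· ≤ v) := by
    rw [countP_le_eq_countP_lt_add_count, add_one_mul]
    have := Nat.div_mul_le_self below α
    omega
  have hle_len : l.countP (· ≤ v) ≤ α * k - 1 := hlen ▸ countP_le_length
  have hk : below / α + 1 < k :=
    Nat.lt_of_mul_lt_mul_right (a := α) (by rw [mul_comm k]; omega)
  refine ⟨below / α + 1, mem_Icc.2 ⟨Nat.le_add_left 1 _, by omega⟩, ?_⟩
  rw [getD_eq_getElem _ _ (by omega)]
  exact hl.getElem_eq_of_countP_lt_le _ (by omega) (by omega)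

end List

theorem Finset.card_filter_eq_count_ofFn {β : Type*} [DecidableEq β] {m : ℕ} (f : Fin m → β)
    (v : β) : #{j | f j = v} = (List.ofFn f).count v := by
  rw [← Multiset.coe_count, ← Fin.univ_val_map, Multiset.count_map, card_def, filter_val]
  simp only [eq_comm]

theorem card_filter_card_lt_mul_pow_le {ι : Type*} (S : Finset ι) (p : ι → Prop)
    [DecidablePred p] (m a : ℕ) {t : ℝ} (ht₀ : 0 ≤ t) (ht₁ : t ≤ 1) :
    (#{J ∈ Fintype.piFinset fun _ : Fin m => S | #{j | p (J j)} < a} : ℝ) * t ^ (a - 1) ≤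
      (#S - (1 - t) * #{s ∈ S | p s}) ^ m := by
  have hsum : ∑ s ∈ S, (if p s then t else 1) = #S - (1 - t) * #{s ∈ S | p s} := by
    have hcard : (#{s ∈ S | p s} : ℝ) + #{s ∈ S | ¬p s} = #S := by
      exact_mod_cast card_filter_add_card_filter_not p
    rw [sum_ite, sum_const, sum_const, nsmul_eq_mul, nsmul_eq_mul]
    linear_combination hcard
  have hprod (J : Fin m → ι) : ∏ j, (if p (J j) then t else 1) = t ^ #{j | p (J j)} := by
    rw [prod_ite, prod_const, prod_const_one, mul_one]
  calc (#{J ∈ Fintype.piFinset fun _ : Fin m => S | #{j | p (J j)} < a} : ℝ) * t ^ (a - 1)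
      = ∑ J ∈ Fintype.piFinset fun _ : Fin m => S with #{j | p (J j)} < a, t ^ (a - 1) := by
        rw [sum_const, nsmul_eq_mul]
    _ ≤ ∑ J ∈ Fintype.piFinset fun _ : Fin m => S with #{j | p (J j)} < a, t ^ #{j | p (J j)} :=
        sum_le_sum fun J hJ =>
          pow_le_pow_of_le_one ht₀ ht₁ (by have := (mem_filter.1 hJ).2; omega)
    _ ≤ ∑ J ∈ Fintype.piFinset fun _ : Fin m => S, t ^ #{j | p (J j)} :=
        sum_le_sum_of_subset_of_nonneg (filter_subset _ _) fun _ _ _ => pow_nonneg ht₀ _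
    _ = (#S - (1 - t) * #{s ∈ S | p s}) ^ m := by
        simp_rw [← hsum, sum_pow', hprod]

theorem one_sub_half_pow_le_exp {ρ : ℝ} {k α : ℕ} (hk : 2 ≤ k) (hα : 1 ≤ α)
    (hρ : 2 / k ≤ ρ) (hρ₂ : ρ ≤ 2) :
    (1 - ρ / 2) ^ (α * k - 1) ≤ exp (-(1 - log 2) * α) * (1 / 2) ^ (α - 1) := by
  have hk₀ : (0 : ℝ) < k := by positivity
  have hm : ((α * k - 1 : ℕ) : ℝ) = α * k - 1 := by
    rw [Nat.cast_sub (by nlinarith), Nat.cast_mul, Nat.cast_one]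
  have hpow : (1 - ρ / 2) ^ (α * k - 1) ≤ exp (((α * k - 1 : ℕ) : ℝ) * -(ρ / 2)) := by
    rw [exp_nat_mul]
    exact pow_le_pow_left₀ (by linarith) (one_sub_le_exp_neg _) _
  have harg : α - 1 / 2 ≤ ((α * k - 1 : ℕ) : ℝ) * (ρ / 2) := by
    have h1k : 1 / (k : ℝ) ≤ ρ / 2 := by
      rw [div_le_div_iff₀ hk₀ two_pos]; linarith [(div_le_iff₀ hk₀).1 hρ]
    have hkR : (2 : ℝ) ≤ k := by exact_mod_cast hk
    calc α - 1 / 2 ≤ ((α * k - 1 : ℕ) : ℝ) * (1 / k) := by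
          rw [hm, sub_mul, one_mul, mul_assoc, mul_one_div_cancel hk₀.ne', mul_one]
          gcongr
      _ ≤ ((α * k - 1 : ℕ) : ℝ) * (ρ / 2) := by gcongr
  have hhalf : ((1 : ℝ) / 2) ^ (α - 1) = exp (((α - 1 : ℕ) : ℝ) * -log 2) := by
    rw [exp_nat_mul, ← log_inv, exp_log (by norm_num), one_div]
  rw [hhalf, ← exp_add]
  refine hpow.trans (exp_le_exp.2 ?_)
  rw [Nat.cast_sub hα, Nat.cast_one]
  nlinarith [log_two_gt_d9]

theorem exists_getD_insertionSort_ofFn_eq {β : Type*} [LinearOrder β] {α k : ℕ} (hα : 0 < α)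
    (f : Fin (α * k - 1) → β) {v : β} (hv : α ≤ #{j | f j = v}) (d : β) :
    ∃ i ∈ Icc 1 (k - 1), ((List.ofFn f).insertionSort (· ≤ ·)).getD (i * α - 1) d = v := by
  have hsorted : ((List.ofFn f).insertionSort (· ≤ ·)).SortedLE := by
    convert List.sortedLE_insertionSort
  refine hsorted.exists_getD_mul_sub_one_eq (k := k) hα (by simp) ?_ d
  rwa [(List.perm_insertionSort _ _).count_eq, ← card_filter_eq_count_ofFn]

theorem card_filter_card_lt_le_exp {ι : Type*} (S : Finset ι) (p : ι → Prop) [DecidablePred p]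
    {k α : ℕ} (hk : 2 ≤ k) (hα : 1 ≤ α) (hfreq : 2 * (#S : ℝ) / k ≤ #{s ∈ S | p s}) :
    (#{J ∈ Fintype.piFinset fun _ : Fin (α * k - 1) => S | #{j | p (J j)} < α} : ℝ) ≤
      exp (-(1 - log 2) * α) * #S ^ (α * k - 1) := by
  obtain hS | hS := (#S).eq_zero_or_pos
  · have hempty : (Fintype.piFinset fun _ : Fin (α * k - 1) => S) = ∅ :=
      Fintype.piFinset_eq_empty.2 ⟨⟨0, by have := Nat.mul_le_mul hα hk; omega⟩, card_eq_zero.1 hS⟩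
    rw [hempty, filter_empty, card_empty, Nat.cast_zero]
    positivity
  have hSR : (0 : ℝ) < #S := by exact_mod_cast hS
  set ρ : ℝ := #{s ∈ S | p s} / #S with hρ_def
  have hρ : 2 / k ≤ ρ := by rwa [le_div_iff₀ hSR, div_mul_eq_mul_div]
  have hρ₁ : ρ ≤ 1 := by
    rw [div_le_one hSR]; exact_mod_cast card_filter_le _ _
  refine le_of_mul_le_mul_right ?_ (by positivity : (0 : ℝ) < (1 / 2) ^ (α - 1))
  calc _ ≤ ((#S : ℝ) * (1 - ρ / 2)) ^ (α * k - 1) := by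
        convert card_filter_card_lt_mul_pow_le S p (α * k - 1) α (t := 1 / 2) (by norm_num)
          (by norm_num) using 2
        rw [hρ_def]
        field_simp
        ring
    _ ≤ _ := by
      rw [mul_pow, mul_comm (exp _), mul_assoc]
      gcongr
      exact one_sub_half_pow_le_exp hk hα hρ (by linarith)

/-- Frequent keys become pivots with high probability. There is an absolute constant
`c > 0` such that for all integers `N`, `k ≥ 2`, `α ≥ 1`, reals `x 1, …, x N`, and any
value `v` occurring at least `2N/k` times among them, the following holds: drawing
`m = α·k - 1` indices `J 0, …, J (m-1)` independently and uniformly from `{1,…,N}`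
(stated by counting the functions `J : Fin m → ℕ` with values in `{1,…,N}`), with
probability at least `1 - e^(-c·α)` at least `α` of the sampled values `x (J j)` equal
`v`, and hence `v` is one of the equidistant pivots `y (i·α)`, `i ∈ {1,…,k-1}`, of the
sorted sample `y 1 ≤ … ≤ y m` obtained by sorting the sampled values. -/
theorem stmt_5 :
    ∃ c : ℝ, 0 < c ∧
      ∀ (N k α : ℕ) (x : ℕ → ℝ) (v : ℝ), 2 ≤ k → 1 ≤ α →
        2 * (N : ℝ) / (k : ℝ) ≤ (((Finset.Icc 1 N).filter fun j => x j = v).card : ℝ) →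
        (1 - Real.exp (-c * (α : ℝ))) *
            ((Fintype.piFinset fun _ : Fin (α * k - 1) => Finset.Icc 1 N).card : ℝ) ≤
          (((Fintype.piFinset fun _ : Fin (α * k - 1) => Finset.Icc 1 N).filter
              fun J : Fin (α * k - 1) → ℕ =>
                α ≤ (Finset.univ.filter fun j : Fin (α * k - 1) => x (J j) = v).card ∧
                ∃ i ∈ Finset.Icc 1 (k - 1),
                  ((List.ofFn fun j : Fin (α * k - 1) => x (J j)).insertionSort
                      (· ≤ ·)).getD (i * α - 1) 0 = v).card : ℝ) := by
  refine ⟨1 - log 2, by linarith [log_two_lt_d9], fun N k α x v hk hα hfreq => ?_⟩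
  have hbad := card_filter_card_lt_le_exp (Icc 1 N) (fun j => x j = v) hk hα
    (by rwa [Nat.card_Icc, add_tsub_cancel_right])
  have hsplit := card_filter_add_card_filter_not
    (s := Fintype.piFinset fun _ : Fin (α * k - 1) => Icc 1 N) fun J => α ≤ #{j | x (J j) = v}
  simp only [not_le] at hsplit
  rw [← Nat.cast_pow, ← Fintype.card_piFinset_const, ← hsplit] at hbad
  calc (1 - exp (-(1 - log 2) * α)) * (#(Fintype.piFinset fun _ : Fin (α * k - 1) => Icc 1 N) : ℝ)
      ≤ #{J ∈ Fintype.piFinset fun _ : Fin (α * k - 1) => Icc 1 N | α ≤ #{j | x (J j) = v}} := by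
        rw [← hsplit]
        push_cast at hbad ⊢
        linarith
    _ ≤ _ := by
      refine Nat.cast_le.2 (card_le_card fun J hJ => ?_)
      simp only [mem_filter] at hJ ⊢
      exact ⟨hJ.1, hJ.2, exists_getD_insertionSort_ofFn_eq hα _ hJ.2 0⟩
end
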